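/- arXiv:2411.00525 — 2 statements merged into one kernel-verified Lean document; each statement's English description precedes it below -/
import Mathlib

section
/- Let m, n be positive natural numbers, let Σ be a real symmetric positive definite m×m matrix, let Φ be a real symmetric positive definite n×n matrix, let M be a real m×n matrix, and let g : ℝ → ℝ be measurable and nonnegative. Then ∫_{ℝ^{m×n}} (det Σ)^{-n/2} (det Φ)^{-m/2} g(tr((X−M)ᵀ Σ⁻¹ (X−M) Φ⁻¹)) dX = ∫_{ℝ^{m×n}} g(tr(Yᵀ Y)) dY, where integration is with respect to Lebesgue measure on m×n real matrices. Consequently, the normalizing constant of the matrix variate elliptically contoured density does not depend on M, Σ, or Φ. -/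
/-!
Write `Σ = Cᵀ C` and `Φ = Dᵀ D` with `C`, `D` invertible. After translating by `M`, substitute
`X = Cᵀ Y D`: this linear map has determinant `(det C)ⁿ (det D)ᵐ`, whose absolute value is
`(det Σ)^{n/2} (det Φ)^{m/2}`, and it turns `tr(Xᵀ Σ⁻¹ X Φ⁻¹)` into
`tr(Dᵀ Yᵀ Y (Dᵀ)⁻¹) = tr(Yᵀ Y)`.
-/

open MeasureTheory Matrix Kronecker

namespace Matrix

variable {R : Type*} [CommRing R] {m n : Type*} [Fintype m] [Fintype n]

theorem stdBasis_repr_apply (X : Matrix m n R) (i : m) (j : n) :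
    (stdBasis R m n).repr X (i, j) = X i j := by
  simp [stdBasis, Pi.basis_repr]

variable [DecidableEq m] [DecidableEq n]

theorem det_mulRightLinearMap_comp_mulLeftLinearMap (A : Matrix m m R) (B : Matrix n n R) :
    LinearMap.det (mulRightLinearMap m R B ∘ₗ mulLeftLinearMap n R A) =
      A.det ^ Fintype.card n * B.det ^ Fintype.card m := by
  have h : LinearMap.toMatrix (stdBasis R m n) (stdBasis R m n)
      (mulRightLinearMap m R B ∘ₗ mulLeftLinearMap n R A) = A ⊗ₖ Bᵀ := by
    ext ⟨i, j⟩ ⟨k, l⟩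
    simp [LinearMap.toMatrix_apply, stdBasis_eq_single, stdBasis_repr_apply, Matrix.mul_apply,
      Matrix.single, ite_and]
  rw [← LinearMap.det_toMatrix (stdBasis R m n), h, det_kronecker, det_transpose]

theorem trace_transpose_mul_inv_mul_mul_inv_eq {S : Matrix m m R} {P : Matrix n n R}
    {C : Matrix m m R} {D : Matrix n n R} (hC : IsUnit C.det) (hD : IsUnit D.det)
    (hS : S = Cᵀ * C) (hP : P = Dᵀ * D) (Y : Matrix m n R) :
    trace ((Cᵀ * Y * D)ᵀ * S⁻¹ * (Cᵀ * Y * D) * P⁻¹) = trace (Yᵀ * Y) := by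
  have hDt : IsUnit Dᵀ.det := by rwa [det_transpose]
  subst hS hP
  rw [mul_inv_rev, mul_inv_rev]
  calc trace ((Cᵀ * Y * D)ᵀ * (C⁻¹ * Cᵀ⁻¹) * (Cᵀ * Y * D) * (D⁻¹ * Dᵀ⁻¹))
      = trace (Dᵀ * (Yᵀ * Y) * Dᵀ⁻¹) := by
        simp only [transpose_mul, transpose_transpose, Matrix.mul_assoc]
        simp [← Matrix.mul_assoc, mul_nonsing_inv, nonsing_inv_mul, hC, hD]
    _ = trace (Yᵀ * Y) := by
        rw [trace_mul_comm, ← Matrix.mul_assoc, nonsing_inv_mul _ hDt, Matrix.one_mul]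

end Matrix

theorem Matrix.PosDef.exists_transpose_mul_self_eq {n : Type*} [Fintype n] [DecidableEq n]
    {S : Matrix n n ℝ} (hS : S.PosDef) :
    ∃ C : Matrix n n ℝ, IsUnit C.det ∧ S = Cᵀ * C := by
  open scoped MatrixOrder in
  obtain ⟨C, hC, rfl⟩ :=
    CStarAlgebra.isStrictlyPositive_iff_eq_star_mul_self.mp hS.isStrictlyPositive
  refine ⟨C, (isUnit_iff_isUnit_det C).mp hC, ?_⟩
  rw [star_eq_conjTranspose, conjTranspose_eq_transpose_of_trivial]

theorem MeasureTheory.Measure.lintegral_comp_linearMap {E : Type*} [NormedAddCommGroup E]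
    [NormedSpace ℝ E] [MeasurableSpace E] [BorelSpace E] [FiniteDimensional ℝ E]
    (μ : Measure E) [μ.IsAddHaarMeasure] {f : E →ₗ[ℝ] E} (hf : LinearMap.det f ≠ 0)
    (F : E → ENNReal) :
    ∫⁻ x, F (f x) ∂μ = ENNReal.ofReal |(LinearMap.det f)⁻¹| * ∫⁻ x, F x ∂μ := by
  let e := (LinearMap.equivOfDetNeZero f hf).toContinuousLinearEquiv.toHomeomorph.toMeasurableEquiv
  rw [← smul_eq_mul, ← lintegral_smul_measure, ← map_linearMap_addHaar_eq_smul_addHaar μ hf]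
  exact (lintegral_map_equiv F e).symm

theorem Real.rpow_neg_div_two_eq_inv_abs_pow {a x : ℝ} (h : a ^ 2 = x) (k : ℕ) :
    x ^ (-(k : ℝ) / 2) = (|a| ^ k)⁻¹ := by
  rw [← h, ← sq_abs, ← Real.rpow_natCast, ← Real.rpow_mul (abs_nonneg a),
    show ((2 : ℕ) : ℝ) * (-(k : ℝ) / 2) = -k by push_cast; ring, Real.rpow_neg (abs_nonneg a),
    Real.rpow_natCast]

theorem stmt_1_general (m n : ℕ)
    (S : Matrix (Fin m) (Fin m) ℝ) (hS : S.PosDef)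
    (P : Matrix (Fin n) (Fin n) ℝ) (hP : P.PosDef)
    (M : Matrix (Fin m) (Fin n) ℝ)
    (g : ℝ → ℝ) :
    (∫⁻ X : Fin m → Fin n → ℝ,
        ENNReal.ofReal (S.det ^ (-(n : ℝ) / 2) * P.det ^ (-(m : ℝ) / 2)
          * g (Matrix.trace ((Matrix.of X - M)ᵀ * S⁻¹ * (Matrix.of X - M) * P⁻¹))))
      = ∫⁻ Y : Fin m → Fin n → ℝ,
          ENNReal.ofReal (g (Matrix.trace ((Matrix.of Y)ᵀ * Matrix.of Y))) := by
  obtain ⟨C, hC, hSC⟩ := hS.exists_transpose_mul_self_eq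
  obtain ⟨D, hD, hPD⟩ := hP.exists_transpose_mul_self_eq
  let L : (Fin m → Fin n → ℝ) →ₗ[ℝ] (Fin m → Fin n → ℝ) :=
    mulRightLinearMap (Fin m) ℝ D ∘ₗ mulLeftLinearMap (Fin n) ℝ Cᵀ
  have hL : LinearMap.det L = C.det ^ n * D.det ^ m := by
    have := det_mulRightLinearMap_comp_mulLeftLinearMap Cᵀ D
    rwa [det_transpose, Fintype.card_fin, Fintype.card_fin] at this
  have hL0 : LinearMap.det L ≠ 0 := by
    rw [hL]; exact mul_ne_zero (pow_ne_zero _ hC.ne_zero) (pow_ne_zero _ hD.ne_zero)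
  have hconst : S.det ^ (-(n : ℝ) / 2) * P.det ^ (-(m : ℝ) / 2) = |(LinearMap.det L)⁻¹| := by
    rw [Real.rpow_neg_div_two_eq_inv_abs_pow (a := C.det) (by rw [hSC, det_mul, det_transpose, sq]),
      Real.rpow_neg_div_two_eq_inv_abs_pow (a := D.det) (by rw [hPD, det_mul, det_transpose, sq]),
      hL, abs_inv, abs_mul, abs_pow, abs_pow, mul_inv]
  let F : (Fin m → Fin n → ℝ) → ENNReal := fun X =>
    ENNReal.ofReal (g (trace ((of X)ᵀ * S⁻¹ * of X * P⁻¹)))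
  calc _ = ENNReal.ofReal |(LinearMap.det L)⁻¹| * ∫⁻ X, F (X - of.symm M) := by
        simp_rw [hconst, ENNReal.ofReal_mul (abs_nonneg _)]
        exact lintegral_const_mul' _ _ ENNReal.ofReal_ne_top
    _ = ∫⁻ Y, F (L Y) := by
        rw [lintegral_sub_right_eq_self F, Measure.lintegral_comp_linearMap volume hL0]
    _ = _ := by
        refine lintegral_congr fun Y => ?_
        exact congrArg (fun t => ENNReal.ofReal (g t)) <|
          trace_transpose_mul_inv_mul_mul_inv_eq hC hD hSC hPD (of Y)

/-- The normalizing constant of the matrix variate elliptically contoured density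
does not depend on `M`, `Σ`, `Φ`: the Lebesgue integral over `m × n` real matrices of
`(det Σ)^{-n/2} (det Φ)^{-m/2} g(tr((X−M)ᵀ Σ⁻¹ (X−M) Φ⁻¹))` equals the integral of
`g(tr(Yᵀ Y))`. -/
theorem stmt_1 (m n : ℕ) (hm : 0 < m) (hn : 0 < n)
    (S : Matrix (Fin m) (Fin m) ℝ) (hSsym : S.IsSymm) (hS : S.PosDef)
    (P : Matrix (Fin n) (Fin n) ℝ) (hPsym : P.IsSymm) (hP : P.PosDef)
    (M : Matrix (Fin m) (Fin n) ℝ)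
    (g : ℝ → ℝ) (hg : Measurable g) (hg0 : ∀ v, 0 ≤ g v) :
    (∫⁻ X : Fin m → Fin n → ℝ,
        ENNReal.ofReal (S.det ^ (-(n : ℝ) / 2) * P.det ^ (-(m : ℝ) / 2)
          * g (Matrix.trace ((Matrix.of X - M)ᵀ * S⁻¹ * (Matrix.of X - M) * P⁻¹))))
      = ∫⁻ Y : Fin m → Fin n → ℝ,
          ENNReal.ofReal (g (Matrix.trace ((Matrix.of Y)ᵀ * Matrix.of Y))) :=
  stmt_1_general m n S hS P hP M g
end

section
/- Let m be a positive natural number, let μ ∈ ℝ^m, let Σ be a real symmetric positive definite m×m matrix, and let r > 0, s > 0, Q be reals with 2Q + m > 2. Define v(x) = (x−μ)ᵀ Σ⁻¹ (x−μ). Then the Kotz type function f(x) = [s · r^{(2Q+m−2)/(2s)} · Γ(m/2) · (det Σ)^{-1/2} / (π^{m/2} · Γ((2Q+m−2)/(2s)))] · v(x)^{Q−1} · exp(−r · v(x)^s) is a probability density on ℝ^m, i.e., f is nonnegative almost everywhere and ∫_{ℝ^m} f(x) dx = 1. -/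
open MeasureTheory Matrix Set Real

/-!
Translating by `μ` and substituting `x = S^{1/2} y` (Jacobian `√(det S)`) turns the integral of
`g((x - μ)ᵀ S⁻¹ (x - μ))` into that of the radial function `g(|y|²)`, which polar coordinates
reduce to `2 π^{m/2} / Γ(m/2) · ∫₀^∞ t^{m-1} g(t²) dt`. For the Kotz kernel this is the Gamma
integral `∫₀^∞ t^{2Q+m-3} e^{-r t^{2s}} dt = Γ(α) / (2 s r^α)` with `α = (2Q+m-2)/(2s)`, and the
normalising constant is exactly the reciprocal of the resulting product.
-/

section

variable {ι E : Type*} [Fintype ι] [NormedAddCommGroup E] [NormedSpace ℝ E]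

theorem integral_comp_mulVec [DecidableEq ι] {B : Matrix ι ι ℝ} (hB : B.det ≠ 0)
    (f : (ι → ℝ) → E) : ∫ y, f (B *ᵥ y) = |B.det|⁻¹ • ∫ x, f x := by
  have hinj : Function.Injective (toLin' B) :=
    mulVec_injective_iff_isUnit.2 ((isUnit_iff_isUnit_det B).2 (isUnit_iff_ne_zero.2 hB))
  have hemb : MeasurableEmbedding (toLin' B) :=
    (LinearMap.isClosedEmbedding_of_injective (LinearMap.ker_eq_bot.2 hinj)).measurableEmbedding
  have := hemb.integral_map (μ := volume) f
  rw [Real.map_matrix_volume_pi_eq_smul_volume_pi hB, integral_smul_measure,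
    ENNReal.toReal_ofReal (abs_nonneg _), abs_inv] at this
  simpa only [toLin'_apply] using this.symm

theorem dotProduct_mulVec_mulVec_self (A B : Matrix ι ι ℝ) (y : ι → ℝ) :
    (B *ᵥ y) ⬝ᵥ (A *ᵥ (B *ᵥ y)) = y ⬝ᵥ ((Bᵀ * A * B) *ᵥ y) := by
  rw [← mulVec_mulVec, ← mulVec_mulVec, dotProduct_mulVec y, vecMul_transpose]

open scoped MatrixOrder in
theorem Matrix.PosDef.exists_mul_self_eq [DecidableEq ι] {S : Matrix ι ι ℝ} (hS : S.PosDef) :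
    ∃ B : Matrix ι ι ℝ, B.IsSymm ∧ B * B = S ∧ B.det = √S.det := by
  refine ⟨CFC.sqrt S, ?_, CFC.sqrt_mul_sqrt_self S hS.posSemidef.nonneg, ?_⟩
  · simpa using (CFC.sqrt_nonneg S).posSemidef.isHermitian
  · simpa using hS.posSemidef.det_sqrt

theorem Matrix.PosDef.integral_comp_dotProduct_inv_mulVec [DecidableEq ι] {S : Matrix ι ι ℝ}
    (hS : S.PosDef) (g : ℝ → E) :
    ∫ x : ι → ℝ, g (x ⬝ᵥ (S⁻¹ *ᵥ x)) = √S.det • ∫ y : ι → ℝ, g (y ⬝ᵥ y) := by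
  obtain ⟨B, hBsymm, hBB, hBdet⟩ := hS.exists_mul_self_eq
  have hBpos : 0 < B.det := hBdet ▸ Real.sqrt_pos.2 hS.det_pos
  have hBunit : IsUnit B.det := isUnit_iff_ne_zero.2 hBpos.ne'
  have hcongr : Bᵀ * S⁻¹ * B = 1 := by
    rw [hBsymm.eq, ← hBB, mul_inv_rev, ← mul_assoc B, mul_nonsing_inv _ hBunit, one_mul,
      nonsing_inv_mul _ hBunit]
  have := integral_comp_mulVec hBpos.ne' fun x ↦ g (x ⬝ᵥ (S⁻¹ *ᵥ x))
  simp only [dotProduct_mulVec_mulVec_self, hcongr, one_mulVec] at this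
  rw [this, ← hBdet, abs_of_pos hBpos, smul_inv_smul₀ hBpos.ne']

theorem EuclideanSpace.dotProduct_ofLp_self (z : EuclideanSpace ℝ ι) :
    z.ofLp ⬝ᵥ z.ofLp = ‖z‖ ^ 2 := by
  rw [← real_inner_self_eq_norm_sq, EuclideanSpace.inner_eq_star_dotProduct, star_trivial]

theorem EuclideanSpace.volume_real_ball_zero_one [Nonempty ι] :
    volume.real (Metric.ball (0 : EuclideanSpace ℝ ι) 1) =
      π ^ ((Fintype.card ι : ℝ) / 2) / Gamma ((Fintype.card ι : ℝ) / 2 + 1) := by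
  rw [measureReal_def, EuclideanSpace.volume_ball, ENNReal.ofReal_one, one_pow, one_mul,
    ENNReal.toReal_ofReal (by positivity), sqrt_eq_rpow, ← rpow_natCast, ← rpow_mul pi_pos.le,
    one_div_mul_eq_div]

theorem integral_fun_dotProduct_self [Nonempty ι] (g : ℝ → E) :
    ∫ y : ι → ℝ, g (y ⬝ᵥ y) =
      (2 * π ^ ((Fintype.card ι : ℝ) / 2) / Gamma ((Fintype.card ι : ℝ) / 2)) •
        ∫ t in Ioi 0, t ^ ((Fintype.card ι : ℝ) - 1) • g (t ^ 2) := by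
  set n := Fintype.card ι
  have hn : 0 < n := Fintype.card_pos
  have hpow : ∀ t ∈ Ioi (0 : ℝ), t ^ (n - 1) • g (t ^ 2) = t ^ ((n : ℝ) - 1) • g (t ^ 2) :=
    fun t _ ↦ by rw [← rpow_natCast, Nat.cast_sub hn, Nat.cast_one]
  have hconst : (n : ℝ) * (π ^ ((n : ℝ) / 2) / Gamma ((n : ℝ) / 2 + 1)) =
      2 * π ^ ((n : ℝ) / 2) / Gamma ((n : ℝ) / 2) := by
    have : 0 < Gamma ((n : ℝ) / 2) := Gamma_pos_of_pos (by positivity)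
    rw [Gamma_add_one (by positivity)]
    field_simp
  calc ∫ y : ι → ℝ, g (y ⬝ᵥ y)
      = ∫ z : EuclideanSpace ℝ ι, g (‖z‖ ^ 2) := by
        simp_rw [← EuclideanSpace.dotProduct_ofLp_self]
        exact ((EuclideanSpace.volume_preserving_symm_measurableEquiv_toLp ι).integral_comp'
          (fun y : ι → ℝ ↦ g (y ⬝ᵥ y))).symm
    _ = _ := by
        rw [integral_fun_norm_addHaar volume (fun t ↦ g (t ^ 2)), finrank_euclideanSpace,
          EuclideanSpace.volume_real_ball_zero_one, setIntegral_congr_fun measurableSet_Ioi hpow,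
          ← Nat.cast_smul_eq_nsmul ℝ, smul_smul, hconst]

end

theorem integral_Ioi_kotz_radial {k r s Q : ℝ} (hr : 0 < r) (hs : 0 < s) (hQ : 2 < 2 * Q + k) :
    ∫ t in Ioi 0, t ^ (k - 1) * ((t ^ 2) ^ (Q - 1) * exp (-r * (t ^ 2) ^ s)) =
      Gamma ((2 * Q + k - 2) / (2 * s)) / (2 * s * r ^ ((2 * Q + k - 2) / (2 * s))) := by
  have hsq : ∀ {t : ℝ}, 0 < t → ∀ a : ℝ, (t ^ 2) ^ a = t ^ (2 * a) := fun ht a ↦ by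
    rw [← rpow_natCast, ← rpow_mul ht.le, Nat.cast_ofNat]
  have hpt : ∀ t ∈ Ioi (0 : ℝ), t ^ (k - 1) * ((t ^ 2) ^ (Q - 1) * exp (-r * (t ^ 2) ^ s)) =
      t ^ (2 * Q + k - 3) * exp (-r * t ^ (2 * s)) := fun t (ht : 0 < t) ↦ by
    rw [hsq ht, hsq ht, ← mul_assoc, ← rpow_add ht]
    ring_nf
  rw [setIntegral_congr_fun measurableSet_Ioi hpt,
    integral_rpow_mul_exp_neg_mul_rpow (by positivity) (by linarith) hr,
    show 2 * Q + k - 3 + 1 = 2 * Q + k - 2 by ring, neg_div, rpow_neg hr.le]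
  field_simp

theorem stmt_5_general (m : ℕ) (hm : 0 < m) (μ : Fin m → ℝ)
    (S : Matrix (Fin m) (Fin m) ℝ) (hS : S.PosDef)
    (r s Q : ℝ) (hr : 0 < r) (hs : 0 < s) (hQ : 2 < 2 * Q + m) :
    (∀ᵐ x : Fin m → ℝ,
        0 ≤ s * r ^ ((2 * Q + m - 2) / (2 * s)) * Real.Gamma ((m : ℝ) / 2)
              * S.det ^ (-(1 : ℝ) / 2)
              / (Real.pi ^ ((m : ℝ) / 2) * Real.Gamma ((2 * Q + m - 2) / (2 * s)))
            * ((x - μ) ⬝ᵥ (S⁻¹ *ᵥ (x - μ))) ^ (Q - 1)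
            * Real.exp (-r * ((x - μ) ⬝ᵥ (S⁻¹ *ᵥ (x - μ))) ^ s)) ∧
    (∫ x : Fin m → ℝ,
        s * r ^ ((2 * Q + m - 2) / (2 * s)) * Real.Gamma ((m : ℝ) / 2)
              * S.det ^ (-(1 : ℝ) / 2)
              / (Real.pi ^ ((m : ℝ) / 2) * Real.Gamma ((2 * Q + m - 2) / (2 * s)))
            * ((x - μ) ⬝ᵥ (S⁻¹ *ᵥ (x - μ))) ^ (Q - 1)
            * Real.exp (-r * ((x - μ) ⬝ᵥ (S⁻¹ *ᵥ (x - μ))) ^ s)) = 1 := by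
  have : Nonempty (Fin m) := Fin.pos_iff_nonempty.1 hm
  set α := (2 * Q + m - 2) / (2 * s)
  have hΓα : 0 < Gamma α := Gamma_pos_of_pos (div_pos (by linarith) (by positivity))
  have hΓm : 0 < Gamma ((m : ℝ) / 2) := Gamma_pos_of_pos (by positivity)
  have hdet : 0 < S.det := hS.det_pos
  set C := s * r ^ α * Gamma ((m : ℝ) / 2) * S.det ^ (-(1 : ℝ) / 2)
    / (π ^ ((m : ℝ) / 2) * Gamma α)
  set g : ℝ → ℝ := fun v ↦ C * v ^ (Q - 1) * exp (-r * v ^ s)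
  refine ⟨ae_of_all _ fun x ↦ ?_, ?_⟩
  · have hv : 0 ≤ (x - μ) ⬝ᵥ (S⁻¹ *ᵥ (x - μ)) := by
      simpa using hS.posSemidef.inv.dotProduct_mulVec_nonneg (x - μ)
    positivity
  have hradial :
      ∫ t in Ioi 0, t ^ ((m : ℝ) - 1) • g (t ^ 2) = C * (Gamma α / (2 * s * r ^ α)) := by
    rw [← integral_Ioi_kotz_radial hr hs hQ, ← integral_const_mul]
    congr with t
    simp only [g, smul_eq_mul]
    ring
  calc ∫ x : Fin m → ℝ, g ((x - μ) ⬝ᵥ (S⁻¹ *ᵥ (x - μ)))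
      = ∫ x : Fin m → ℝ, g (x ⬝ᵥ (S⁻¹ *ᵥ x)) :=
        integral_sub_right_eq_self (fun x ↦ g (x ⬝ᵥ (S⁻¹ *ᵥ x))) μ
    _ = √S.det * (2 * π ^ ((m : ℝ) / 2) / Gamma ((m : ℝ) / 2))
          * (C * (Gamma α / (2 * s * r ^ α))) := by
        rw [hS.integral_comp_dotProduct_inv_mulVec, integral_fun_dotProduct_self, Fintype.card_fin,
          hradial, smul_eq_mul, smul_eq_mul, ← mul_assoc]
    _ = 1 := by
        have hdet' : S.det ^ (-(1 : ℝ) / 2) = (√S.det)⁻¹ := by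
          rw [neg_div, rpow_neg hdet.le, ← sqrt_eq_rpow]
        have : 0 < √S.det := sqrt_pos.2 hdet
        simp only [C, hdet']
        field_simp

/-- The Kotz type function with location `μ`, positive definite scale `Σ`, and parameters
`r > 0`, `s > 0`, `2Q + m > 2` is a probability density on `ℝ^m`: it is nonnegative almost
everywhere and integrates to `1` with respect to Lebesgue measure. -/
theorem stmt_5 (m : ℕ) (hm : 0 < m) (μ : Fin m → ℝ)
    (S : Matrix (Fin m) (Fin m) ℝ) (hSsym : S.IsSymm) (hS : S.PosDef)
    (r s Q : ℝ) (hr : 0 < r) (hs : 0 < s) (hQ : 2 < 2 * Q + m) :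
    (∀ᵐ x : Fin m → ℝ,
        0 ≤ s * r ^ ((2 * Q + m - 2) / (2 * s)) * Real.Gamma ((m : ℝ) / 2)
              * S.det ^ (-(1 : ℝ) / 2)
              / (Real.pi ^ ((m : ℝ) / 2) * Real.Gamma ((2 * Q + m - 2) / (2 * s)))
            * ((x - μ) ⬝ᵥ (S⁻¹ *ᵥ (x - μ))) ^ (Q - 1)
            * Real.exp (-r * ((x - μ) ⬝ᵥ (S⁻¹ *ᵥ (x - μ))) ^ s)) ∧
    (∫ x : Fin m → ℝ,
        s * r ^ ((2 * Q + m - 2) / (2 * s)) * Real.Gamma ((m : ℝ) / 2)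
              * S.det ^ (-(1 : ℝ) / 2)
              / (Real.pi ^ ((m : ℝ) / 2) * Real.Gamma ((2 * Q + m - 2) / (2 * s)))
            * ((x - μ) ⬝ᵥ (S⁻¹ *ᵥ (x - μ))) ^ (Q - 1)
            * Real.exp (-r * ((x - μ) ⬝ᵥ (S⁻¹ *ᵥ (x - μ))) ^ s)) = 1 :=
  stmt_5_general m hm μ S hS r s Q hr hs hQ
end
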